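/- Let (𝔈, ε₁, ε₂⁰, ε₂¹) be an hLie₂-algebra concentrated in non-positive degrees (𝔈_k = 0 for k > 0, so that ε₁ vanishes on 𝔈₀). Then: (i) ε₂⁰(ε₂¹(a,b), c) = 0 for all homogeneous a, b, c ∈ 𝔈; and (ii) for all x, y ∈ 𝔈₀ and all homogeneous u ∈ 𝔈: ε₁(ε₂¹(x, ε₂¹(y,u))) = ε₂¹(x, ε₂¹(y, ε₁(u))) + ε₂¹(ε₂⁰(x,y), u) + ε₂¹(y, ε₂⁰(x,u)) − ε₂¹(x, ε₂⁰(y,u)) − ε₂¹(x, ε₂⁰(u,y)). -/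

import Mathlib

/-- The sign `(-1)^n` for `n : ℤ`, valued in the field `K`. -/
noncomputable def sgn (K : Type*) [Field K] (n : ℤ) : K :=
  ((Int.negOnePow n : ℤ) : K)

/-- An hLie₂-algebra structure on a graded vector space. -/
structure IsHLie2 (K : Type*) [Field K] [CharZero K] {E : Type*}
    [AddCommGroup E] [Module K E] (G : ℤ → Submodule K E)
    (e1 : E →ₗ[K] E) (e2 : ℤ → E →ₗ[K] E →ₗ[K] E) : Prop where
  /-- `ε₂ⁱ = 0` for `i ∉ {0,1}`. -/
  e2_zero : ∀ i : ℤ, i ≠ 0 → i ≠ 1 → e2 i = 0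
  /-- `ε₁` has degree `1`. -/
  e1_deg : ∀ (p : ℤ) (x : E), x ∈ G p → e1 x ∈ G (p + 1)
  /-- `ε₂ⁱ` has degree `-i`. -/
  e2_deg : ∀ (i p q : ℤ) (x y : E), x ∈ G p → y ∈ G q → e2 i x y ∈ G (p + q - i)
  /-- (R1) -/
  rel1 : ∀ (p : ℤ) (x : E), x ∈ G p → e1 (e1 x) = 0
  /-- (R2) -/
  rel2 : ∀ (i : ℕ) (p q : ℤ) (x₁ x₂ : E), x₁ ∈ G p → x₂ ∈ G q →
    e1 (e2 (i : ℤ) x₁ x₂) =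
      sgn K (i : ℤ) • (e2 (i : ℤ) (e1 x₁) x₂ + sgn K p • e2 (i : ℤ) x₁ (e1 x₂))
        + e2 ((i : ℤ) - 1) x₁ x₂ - sgn K ((i : ℤ) + p * q) • e2 ((i : ℤ) - 1) x₂ x₁
  /-- (R3) -/
  rel3 : ∀ (i : ℕ) (p q r : ℤ) (x₁ x₂ x₃ : E), x₁ ∈ G p → x₂ ∈ G q → x₃ ∈ G r →
    e2 (i : ℤ) (e2 (i : ℤ) x₁ x₂) x₃ =
      sgn K ((i : ℤ) * (p + 1)) • e2 (i : ℤ) x₁ (e2 (i : ℤ) x₂ x₃)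
        - sgn K ((p + (i : ℤ)) * q) • e2 (i : ℤ) x₂ (e2 (i : ℤ) x₁ x₃)
        - sgn K ((q + r) * p + ((i : ℤ) - 1) * q) •
            e2 ((i : ℤ) + 1) x₂ (e2 ((i : ℤ) - 1) x₃ x₁)
  /-- (R4) -/
  rel4 : ∀ (i j : ℕ), j < i → ∀ (p q r : ℤ) (x₁ x₂ x₃ : E),
    x₁ ∈ G p → x₂ ∈ G q → x₃ ∈ G r →
    e2 (j : ℤ) (e2 (i : ℤ) x₁ x₂) x₃ =
      sgn K (1 + (j : ℤ) * ((i : ℤ) + 1) + p * (q + r) + ((j : ℤ) - 1) * q) •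
        e2 ((i : ℤ) + 1) x₂ (e2 ((j : ℤ) - 1) x₃ x₁)
  /-- (R5) -/
  rel5 : ∀ (i j : ℕ), j < i → ∀ (p q r : ℤ) (x₁ x₂ x₃ : E),
    x₁ ∈ G p → x₂ ∈ G q → x₃ ∈ G r →
    e2 (i : ℤ) (e2 (j : ℤ) x₁ x₂) x₃ =
      sgn K ((i : ℤ) * ((j : ℤ) + p)) • e2 (j : ℤ) x₁ (e2 (i : ℤ) x₂ x₃)
        - sgn K ((p + (j : ℤ)) * q) • e2 (i : ℤ) x₂ (e2 (j : ℤ) x₁ x₃)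
        - sgn K ((j : ℤ) + r * ((j : ℤ) + q - 1) + p * (q + r)) •
            e2 ((i : ℤ) + 1) x₃ (e2 ((j : ℤ) - 1) x₂ x₁)

/-- A differential graded Lie algebra structure on a graded vector space. -/
structure IsDGLA (K : Type*) [Field K] {V : Type*} [AddCommGroup V] [Module K V]
    (G : ℤ → Submodule K V) (d : V →ₗ[K] V) (br : V →ₗ[K] V →ₗ[K] V) : Prop where
  d_deg : ∀ (p : ℤ) (x : V), x ∈ G p → d x ∈ G (p + 1)
  d_sq : ∀ (p : ℤ) (x : V), x ∈ G p → d (d x) = 0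
  br_deg : ∀ (p q : ℤ) (x y : V), x ∈ G p → y ∈ G q → br x y ∈ G (p + q)
  antisym : ∀ (p q : ℤ) (x y : V), x ∈ G p → y ∈ G q →
    br x y = - (sgn K (p * q) • br y x)
  jacobi : ∀ (p q r : ℤ) (x y z : V), x ∈ G p → y ∈ G q → z ∈ G r →
    br x (br y z) = br (br x y) z + sgn K (p * q) • br y (br x z)
  leibniz : ∀ (p q : ℤ) (x y : V), x ∈ G p → y ∈ G q →
    d (br x y) = br (d x) y + sgn K p • br x (d y)

/-!
Part (i) is the instance `i = 1, j = 0` of (R4), whose right-hand side involves `ε₂²`, which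
vanishes. For (ii), elements of `𝔈₀` are `ε₁`-closed since `𝔈₁ = 0`. Expanding
`ε₁(ε₂¹(x, ε₂¹(y,u)))` and then `ε₁(ε₂¹(y,u))` by (R2) with `i = 1` leaves the terms
`ε₂⁰(ε₂¹(y,u), x)`, which vanishes by (i), and `ε₂⁰(x, ε₂¹(y,u))`, which (R5) with
`i = 1, j = 0` rewrites as `ε₂¹(ε₂⁰(x,y), u) + ε₂¹(y, ε₂⁰(x,u))`.
-/

section sgn

variable (K : Type*) [Field K]

@[simp]
lemma sgn_zero : sgn K 0 = 1 := by simp [sgn]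

@[simp]
lemma sgn_one : sgn K 1 = -1 := by simp [sgn]

end sgn

namespace IsHLie2

variable {K : Type*} [Field K] [CharZero K] {E : Type*} [AddCommGroup E] [Module K E]
  {G : ℤ → Submodule K E} {e1 : E →ₗ[K] E} {e2 : ℤ → E →ₗ[K] E →ₗ[K] E}

lemma e2_two (hE : IsHLie2 K G e1 e2) : e2 2 = 0 :=
  hE.e2_zero 2 (by norm_num) (by norm_num)

lemma e2_zero_e2_one_left (hE : IsHLie2 K G e1 e2) {p q r : ℤ} {a b c : E}
    (ha : a ∈ G p) (hb : b ∈ G q) (hc : c ∈ G r) : e2 0 (e2 1 a b) c = 0 := by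
  simpa [hE.e2_two] using hE.rel4 1 0 zero_lt_one p q r a b c ha hb hc

lemma e1_eq_zero_of_mem_zero (hE : IsHLie2 K G e1 e2) (hG : G 1 = ⊥) {x : E}
    (hx : x ∈ G 0) : e1 x = 0 := by
  simpa [hG] using hE.e1_deg 0 x hx

lemma e1_e2_one_of_mem_zero (hE : IsHLie2 K G e1 e2) {q : ℤ} {x v : E}
    (hx : x ∈ G 0) (hx₁ : e1 x = 0) (hv : v ∈ G q) :
    e1 (e2 1 x v) = -e2 1 x (e1 v) + e2 0 x v + e2 0 v x := by
  have h := hE.rel2 1 0 q x v hx hv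
  simp only [Nat.cast_one, sub_self, zero_mul, add_zero, hx₁, map_zero, LinearMap.zero_apply,
    zero_add, sgn_zero, sgn_one, one_smul, neg_one_smul, sub_neg_eq_add] at h
  exact h

lemma e2_zero_e2_one_right (hE : IsHLie2 K G e1 e2) {s : ℤ} {x y u : E}
    (hx : x ∈ G 0) (hy : y ∈ G 0) (hu : u ∈ G s) :
    e2 0 x (e2 1 y u) = e2 1 (e2 0 x y) u + e2 1 y (e2 0 x u) := by
  have h := hE.rel5 1 0 zero_lt_one 0 0 s x y u hx hy hu
  simp only [Nat.cast_one, Nat.cast_zero, add_zero, mul_zero, zero_mul, sgn_zero, one_smul,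
    one_add_one_eq_two, hE.e2_two, LinearMap.zero_apply, smul_zero, sub_zero] at h
  rw [h, sub_add_cancel]

end IsHLie2

/-- In an hLie₂-algebra concentrated in non-positive degrees:
(i) `ε₂⁰(ε₂¹(a,b), c) = 0` for all homogeneous `a, b, c`, and
(ii) for all `x, y ∈ 𝔈₀` and homogeneous `u`:
`ε₁(ε₂¹(x, ε₂¹(y,u))) = ε₂¹(x, ε₂¹(y, ε₁(u))) + ε₂¹(ε₂⁰(x,y), u) + ε₂¹(y, ε₂⁰(x,u))
  − ε₂¹(x, ε₂⁰(y,u)) − ε₂¹(x, ε₂⁰(u,y))`. -/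
theorem hLie2_nonpos_higher_alternator_identities
    (K : Type*) [Field K] [CharZero K] {E : Type*} [AddCommGroup E] [Module K E]
    (G : ℤ → Submodule K E) (e1 : E →ₗ[K] E) (e2 : ℤ → E →ₗ[K] E →ₗ[K] E)
    (hE : IsHLie2 K G e1 e2)
    (htrunc : ∀ k : ℤ, 0 < k → G k = ⊥) :
    (∀ (p q r : ℤ) (a b c : E), a ∈ G p → b ∈ G q → c ∈ G r →
      e2 0 (e2 1 a b) c = 0)
    ∧ (∀ (s : ℤ) (x y u : E), x ∈ G 0 → y ∈ G 0 → u ∈ G s →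
      e1 (e2 1 x (e2 1 y u)) =
        e2 1 x (e2 1 y (e1 u)) + e2 1 (e2 0 x y) u + e2 1 y (e2 0 x u)
          - e2 1 x (e2 0 y u) - e2 1 x (e2 0 u y)) := by
  refine ⟨fun p q r a b c ha hb hc => hE.e2_zero_e2_one_left ha hb hc, ?_⟩
  intro s x y u hx hy hu
  have hG : G 1 = ⊥ := htrunc 1 one_pos
  have hyu : e2 1 y u ∈ G (0 + s - 1) := hE.e2_deg 1 0 s y u hy hu
  rw [hE.e1_e2_one_of_mem_zero hx (hE.e1_eq_zero_of_mem_zero hG hx) hyu,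
    hE.e1_e2_one_of_mem_zero hy (hE.e1_eq_zero_of_mem_zero hG hy) hu,
    hE.e2_zero_e2_one_left hy hu hx, hE.e2_zero_e2_one_right hx hy hu]
  simp only [map_add, map_neg]
  abel
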